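/- arXiv:2105.05359 — 7 statements merged into one kernel-verified Lean document; each statement's English description precedes it below -/
import Mathlib

section
/- For the Black-Scholes call price P(S,K,τ,σ) = S·Φ(d₊) − K·Φ(d₋) with d± = log(S/K)/(σ√τ) ± σ√τ/2, the theta satisfies ∂P/∂τ = S·φ(d₊)·σ/(2√τ). -/
/-! The price depends on `τ` only through the total volatility `v = σ√τ`. Differentiating in `v`,
the two terms `S φ(d₊) ∂d₊/∂v` and `K φ(d₋) ∂d₋/∂v` nearly cancel because of the identity
`K φ(d₋) = S φ(d₊)`, leaving `S φ(d₊) (∂d₊/∂v - ∂d₋/∂v) = S φ(d₊)`; the chain rule with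
`dv/dτ = σ/(2√τ)` gives the theta. -/

open Real MeasureTheory

/-- Standard normal probability density function. -/
noncomputable def stdPdf (x : ℝ) : ℝ := (Real.sqrt (2 * Real.pi))⁻¹ * Real.exp (-x ^ 2 / 2)

/-- Standard normal cumulative distribution function. -/
noncomputable def stdCdf (x : ℝ) : ℝ := ∫ t in Set.Iic x, stdPdf t

/-- Black-Scholes call price. -/
noncomputable def bsPrice (S K τ σ : ℝ) : ℝ :=
  S * stdCdf (Real.log (S / K) / (σ * Real.sqrt τ) + σ * Real.sqrt τ / 2)
    - K * stdCdf (Real.log (S / K) / (σ * Real.sqrt τ) - σ * Real.sqrt τ / 2)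

theorem hasDerivAt_integral_Iic {f : ℝ → ℝ} (hf : Integrable f) (hc : Continuous f) (x : ℝ) :
    HasDerivAt (fun y => ∫ t in Set.Iic y, f t) (f x) x := by
  have hsplit : (fun y => ∫ t in Set.Iic y, f t) =
      fun y => (∫ t in Set.Iic 0, f t) + ∫ t in (0 : ℝ)..y, f t := by
    funext y
    rw [← intervalIntegral.integral_Iic_sub_Iic hf.integrableOn hf.integrableOn]
    ring
  rw [hsplit]
  exact (intervalIntegral.integral_hasDerivAt_right hf.intervalIntegrable
    hc.aestronglyMeasurable.stronglyMeasurableAtFilter hc.continuousAt).const_add _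

theorem continuous_stdPdf : Continuous stdPdf := by
  unfold stdPdf
  fun_prop

theorem integrable_stdPdf : Integrable stdPdf := by
  convert (integrable_exp_neg_mul_sq (one_half_pos (α := ℝ))).const_mul (√(2 * π))⁻¹ using 2
  unfold stdPdf
  ring_nf

theorem hasDerivAt_stdCdf (x : ℝ) : HasDerivAt stdCdf (stdPdf x) x :=
  hasDerivAt_integral_Iic integrable_stdPdf continuous_stdPdf x

theorem stdPdf_sub (a b : ℝ) : stdPdf (a - b) = exp (2 * a * b) * stdPdf (a + b) := by
  unfold stdPdf
  rw [mul_left_comm, ← exp_add]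
  ring_nf

noncomputable def bsPriceTotalVol (S K v : ℝ) : ℝ :=
  S * stdCdf (log (S / K) / v + v / 2) - K * stdCdf (log (S / K) / v - v / 2)

theorem mul_stdPdf_d_minus {S K : ℝ} (hS : 0 < S) (hK : 0 < K) {v : ℝ} (hv : v ≠ 0) :
    K * stdPdf (log (S / K) / v - v / 2) = S * stdPdf (log (S / K) / v + v / 2) := by
  rw [stdPdf_sub, show 2 * (log (S / K) / v) * (v / 2) = log (S / K) by field_simp,
    exp_log (div_pos hS hK), ← mul_assoc, mul_div_cancel₀ _ hK.ne']

theorem hasDerivAt_bsPriceTotalVol {S K : ℝ} (hS : 0 < S) (hK : 0 < K) {v : ℝ} (hv : v ≠ 0) :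
    HasDerivAt (bsPriceTotalVol S K) (S * stdPdf (log (S / K) / v + v / 2)) v := by
  set L := log (S / K)
  have hL : HasDerivAt (fun w => L / w) (-L / v ^ 2) v := by
    simpa [div_eq_mul_inv, neg_div] using (hasDerivAt_inv hv).const_mul L
  have hhalf : HasDerivAt (fun w : ℝ => w / 2) (1 / 2) v := (hasDerivAt_id v).div_const 2
  have hP : HasDerivAt (bsPriceTotalVol S K)
      (S * (stdPdf (L / v + v / 2) * (-L / v ^ 2 + 1 / 2))
        - K * (stdPdf (L / v - v / 2) * (-L / v ^ 2 - 1 / 2))) v :=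
    (((hasDerivAt_stdCdf _).comp v (hL.add hhalf)).const_mul S).sub
      (((hasDerivAt_stdCdf _).comp v (hL.sub hhalf)).const_mul K)
  convert hP using 1
  rw [← mul_assoc K, mul_stdPdf_d_minus hS hK hv]
  ring

/-- The Black-Scholes theta: ∂P/∂τ = S·φ(d₊)·σ/(2√τ). -/
theorem bs_theta (S K τ σ : ℝ) (hS : 0 < S) (hK : 0 < K) (hτ : 0 < τ) (hσ : 0 < σ) :
    HasDerivAt (fun t => bsPrice S K t σ)
      (S * stdPdf (Real.log (S / K) / (σ * Real.sqrt τ) + σ * Real.sqrt τ / 2) * σ /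
        (2 * Real.sqrt τ)) τ := by
  have hv : σ * √τ ≠ 0 := (mul_pos hσ (sqrt_pos.mpr hτ)).ne'
  have hvol : HasDerivAt (fun t => σ * √t) (σ * (1 / (2 * √τ))) τ :=
    (hasDerivAt_sqrt hτ.ne').const_mul σ
  refine ((hasDerivAt_bsPriceTotalVol hS hK hv).comp τ hvol).congr_deriv ?_
  ring
end

section
/- Let ρ ∈ (−1,1), H = 0, and G₀(y) = log(1 + 2ρy + y²) + (2ρ/√(1−ρ²))·(arctan(ρ/√(1−ρ²)) − arctan((y+ρ)/√(1−ρ²))). Then G₀ satisfies the ODE (1/4)·G₀'(y)²·(y² + 2ρy + 1) = y·G₀'(y)/2 with G₀(0) = 0, i.e., the equation (1/4)G'(y)²·(y²/(2H+1)² + 2ρy/(2H+1) + 1) = (1−2H)·y·G'(y)/2 + 2H·G(y) with H = 0. -/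
/-!
Writing `Q y = 1 + 2ρy + y² = (y + ρ)² + (1 - ρ²)`, the derivative of the arctangent term is
`-2ρ / Q y`, which cancels the `ρ`-part of `(log Q)' = (2ρ + 2y) / Q`. Hence `G₀' = 2y / Q`, and
both sides of the equation equal `y² / Q`.
-/

open Real

lemma hasDerivAt_arctan_add_div {a s : ℝ} (hs : s ≠ 0) (x : ℝ) :
    HasDerivAt (fun x => arctan ((x + a) / s)) (s / ((x + a) ^ 2 + s ^ 2)) x := by
  have hinner : HasDerivAt (fun x => (x + a) / s) (1 / s) x :=
    ((hasDerivAt_id' x).add_const a).div_const s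
  convert hinner.arctan using 1
  field_simp
  ring

lemma one_add_two_mul_mul_add_sq_eq {ρ : ℝ} (hρ : ρ ^ 2 < 1) (y : ℝ) :
    1 + 2 * ρ * y + y ^ 2 = (y + ρ) ^ 2 + √(1 - ρ ^ 2) ^ 2 := by
  rw [sq_sqrt (by linarith)]
  ring

lemma one_add_two_mul_mul_add_sq_pos {ρ : ℝ} (hρ : ρ ^ 2 < 1) (y : ℝ) :
    0 < 1 + 2 * ρ * y + y ^ 2 := by
  nlinarith [sq_nonneg (y + ρ)]

noncomputable def sabrG0 (ρ y : ℝ) : ℝ :=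
  log (1 + 2 * ρ * y + y ^ 2) +
    (2 * ρ / √(1 - ρ ^ 2)) * (arctan (ρ / √(1 - ρ ^ 2)) - arctan ((y + ρ) / √(1 - ρ ^ 2)))

lemma sabrG0_zero (ρ : ℝ) : sabrG0 ρ 0 = 0 := by
  simp [sabrG0]

lemma hasDerivAt_sabrG0 {ρ : ℝ} (hρ : ρ ^ 2 < 1) (y : ℝ) :
    HasDerivAt (sabrG0 ρ) (2 * y / (1 + 2 * ρ * y + y ^ 2)) y := by
  have hs : √(1 - ρ ^ 2) ≠ 0 := (sqrt_pos.mpr (by linarith)).ne'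
  have hQ := one_add_two_mul_mul_add_sq_pos hρ y
  have hlog : HasDerivAt (fun x => log (1 + 2 * ρ * x + x ^ 2))
      ((2 * ρ + 2 * y) / (1 + 2 * ρ * y + y ^ 2)) y := by
    refine HasDerivAt.log (((((hasDerivAt_id' y).const_mul (2 * ρ)).const_add 1).add
      (hasDerivAt_pow 2 y)).congr_deriv ?_) hQ.ne'
    ring
  have harctan := hasDerivAt_arctan_add_div (a := ρ) hs y
  rw [← one_add_two_mul_mul_add_sq_eq hρ y] at harctan
  refine (hlog.add (((hasDerivAt_const y (arctan (ρ / √(1 - ρ ^ 2)))).sub harctan).const_mul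
    (2 * ρ / √(1 - ρ ^ 2)))).congr_deriv ?_
  field_simp
  ring

/-- G₀(y) = log(1+2ρy+y²) + (2ρ/√(1−ρ²))·(arctan(ρ/√(1−ρ²)) − arctan((y+ρ)/√(1−ρ²)))
satisfies (1/4)·G₀'(y)²·(y² + 2ρy + 1) = y·G₀'(y)/2 with G₀(0) = 0, which is the ODE
(1/4)G'²·(y²/(2H+1)² + 2ρy/(2H+1) + 1) = (1−2H)yG'/2 + 2HG for H = 0. -/
theorem sabr_G0_ode (ρ : ℝ) (hρ : ρ ∈ Set.Ioo (-1 : ℝ) 1) (G₀ : ℝ → ℝ)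
    (hG₀ : ∀ y, G₀ y = Real.log (1 + 2 * ρ * y + y ^ 2) +
      (2 * ρ / Real.sqrt (1 - ρ ^ 2)) *
        (Real.arctan (ρ / Real.sqrt (1 - ρ ^ 2)) -
          Real.arctan ((y + ρ) / Real.sqrt (1 - ρ ^ 2)))) :
    G₀ 0 = 0 ∧
    ∀ y : ℝ, (1 / 4) * (deriv G₀ y) ^ 2 * (y ^ 2 + 2 * ρ * y + 1) = y * deriv G₀ y / 2 := by
  have hρ2 : ρ ^ 2 < 1 := by nlinarith [hρ.1, hρ.2]
  obtain rfl : G₀ = sabrG0 ρ := funext hG₀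
  refine ⟨sabrG0_zero ρ, fun y => ?_⟩
  have hQ := one_add_two_mul_mul_add_sq_pos hρ2 y
  rw [(hasDerivAt_sabrG0 hρ2 y).deriv, show y ^ 2 + 2 * ρ * y + 1 = 1 + 2 * ρ * y + y ^ 2 by ring]
  field_simp
  ring
end

section
/- Let ρ ∈ (−1,1) and G_{1/2}(y) = 4·(log((√(1 + ρy + y²/4) − ρ − y/2)/(1 − ρ)))². Then G_{1/2} satisfies the ODE (1/4)·G'(y)²·(y²/4 + ρy + 1) = G(y) with G(0) = 0, which is equation (1/4)G'(y)²·(y²/(2H+1)² + 2ρy/(2H+1) + 1) = (1−2H)·y·G'(y)/2 + 2H·G(y) for H = 1/2. -/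
open Real Set

/- With `p = ρ + y/2` and `c = 1 - ρ² > 0` the radicand is `p² + c`, so `√(p² + c) > |p|` and the
logarithm `ℓ` in `G = 4 ℓ²` is defined for every `y`. Its derivative is the arsinh-type
`ℓ' = -1 / (2 √(p² + c))`, hence `G' = -4 ℓ / √(p² + c)` and `G'² (p² + c) / 4 = 4 ℓ² = G`. -/

lemma Real.sqrt_sq_add_sub_pos {c : ℝ} (hc : 0 < c) (x : ℝ) : 0 < √(x ^ 2 + c) - x := by
  have : |x| < √(x ^ 2 + c) := by
    rw [← sqrt_sq_eq_abs]
    exact sqrt_lt_sqrt (sq_nonneg x) (by linarith)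
  linarith [le_abs_self x]

lemma Real.hasDerivAt_log_sqrt_sq_add_sub {c : ℝ} (hc : 0 < c) (x : ℝ) :
    HasDerivAt (fun x => log (√(x ^ 2 + c) - x)) (-1 / √(x ^ 2 + c)) x := by
  have hq : x ^ 2 + c ≠ 0 := by positivity
  have hu := sqrt_sq_add_sub_pos hc x
  have hsqrt : HasDerivAt (fun x => √(x ^ 2 + c)) (2 * x / (2 * √(x ^ 2 + c))) x := by
    simpa using ((hasDerivAt_pow 2 x).add_const c).sqrt hq
  refine ((hsqrt.sub (hasDerivAt_id' x)).log hu.ne').congr_deriv ?_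
  rw [Pi.sub_apply]
  field_simp [hu.ne']
  ring

lemma log_Ghalf_arg_eq {ρ : ℝ} (hρ : ρ ∈ Ioo (-1 : ℝ) 1) (y : ℝ) :
    log ((√(1 + ρ * y + y ^ 2 / 4) - ρ - y / 2) / (1 - ρ)) =
      log (√((ρ + y / 2) ^ 2 + (1 - ρ ^ 2)) - (ρ + y / 2)) - log (1 - ρ) := by
  have hc : 0 < 1 - ρ ^ 2 := by nlinarith [hρ.1, hρ.2]
  have hquad : 1 + ρ * y + y ^ 2 / 4 = (ρ + y / 2) ^ 2 + (1 - ρ ^ 2) := by ring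
  rw [hquad, sub_sub, log_div (sqrt_sq_add_sub_pos hc _).ne' (by linarith [hρ.2])]

lemma hasDerivAt_log_Ghalf_arg {ρ : ℝ} (hρ : ρ ∈ Ioo (-1 : ℝ) 1) (y : ℝ) :
    HasDerivAt (fun y => log ((√(1 + ρ * y + y ^ 2 / 4) - ρ - y / 2) / (1 - ρ)))
      (-1 / (2 * √(1 + ρ * y + y ^ 2 / 4))) y := by
  have hc : 0 < 1 - ρ ^ 2 := by nlinarith [hρ.1, hρ.2]
  have hp : HasDerivAt (fun y : ℝ => ρ + y / 2) (1 / 2) y :=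
    ((hasDerivAt_id y).div_const 2).const_add ρ
  have hquad : 1 + ρ * y + y ^ 2 / 4 = (ρ + y / 2) ^ 2 + (1 - ρ ^ 2) := by ring
  simp_rw [log_Ghalf_arg_eq hρ]
  refine (((hasDerivAt_log_sqrt_sq_add_sub hc (ρ + y / 2)).comp y hp).sub_const
    (log (1 - ρ))).congr_deriv ?_
  rw [hquad]
  ring

theorem sabr_Ghalf_ode_general (ρ : ℝ) (hρ : ρ ∈ Set.Ioo (-1 : ℝ) 1) (a b : ℝ)
    (G : ℝ → ℝ)
    (hG : ∀ y, G y =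
      4 * (Real.log ((Real.sqrt (1 + ρ * y + y ^ 2 / 4) - ρ - y / 2) / (1 - ρ))) ^ 2) :
    G 0 = 0 ∧
    ∀ y ∈ Set.Ioo a b, (1 / 4) * (deriv G y) ^ 2 * (y ^ 2 / 4 + ρ * y + 1) = G y := by
  have h1ρ : 1 - ρ ≠ 0 := by linarith [hρ.2]
  refine ⟨by simp [hG, h1ρ], fun y _ => ?_⟩
  set s := √(1 + ρ * y + y ^ 2 / 4)
  have hq : 0 < 1 + ρ * y + y ^ 2 / 4 := by nlinarith [hρ.1, hρ.2, sq_nonneg (ρ + y / 2)]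
  have hs : 0 < s := sqrt_pos.mpr hq
  have hderiv : deriv G y = 4 * (2 * log ((s - ρ - y / 2) / (1 - ρ)) * (-1 / (2 * s))) := by
    rw [funext hG]
    simpa using (((hasDerivAt_log_Ghalf_arg hρ y).pow 2).const_mul 4).deriv
  have hs2 : y ^ 2 / 4 + ρ * y + 1 = s ^ 2 := by rw [sq_sqrt hq.le]; ring
  have hsquare : ∀ L : ℝ, 1 / 4 * (4 * (2 * L * (-1 / (2 * s)))) ^ 2 * s ^ 2 = 4 * L ^ 2 := by
    intro L
    field_simp
  rw [hderiv, hG y, hs2]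
  exact hsquare _

/-- G_{1/2}(y) = 4·(log((√(1+ρy+y²/4) − ρ − y/2)/(1−ρ)))² satisfies
(1/4)·G'(y)²·(y²/4 + ρy + 1) = G(y) with G(0) = 0, which is the ODE
(1/4)G'²·(y²/(2H+1)² + 2ρy/(2H+1) + 1) = (1−2H)yG'/2 + 2HG for H = 1/2. -/
theorem sabr_Ghalf_ode (ρ : ℝ) (hρ : ρ ∈ Set.Ioo (-1 : ℝ) 1) (a b : ℝ) (ha : a < 0) (hb : 0 < b)
    (G : ℝ → ℝ)
    (hG : ∀ y, G y =
      4 * (Real.log ((Real.sqrt (1 + ρ * y + y ^ 2 / 4) - ρ - y / 2) / (1 - ρ))) ^ 2)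
    (hpos : ∀ y ∈ Set.Ioo a b, 0 < Real.sqrt (1 + ρ * y + y ^ 2 / 4) - ρ - y / 2) :
    G 0 = 0 ∧
    ∀ y ∈ Set.Ioo a b, (1 / 4) * (deriv G y) ^ 2 * (y ^ 2 / 4 + ρ * y + 1) = G y :=
  sabr_Ghalf_ode_general ρ hρ a b G hG
end

section
/- Let H ∈ (0,1/2], ρ ∈ ℝ, and suppose f is smooth near 0 with f(0) = 1 and satisfies (1 − y·f'(y)/f(y))²·(1 + 2ρy/(2H+1) + (y/(2H+1))²) = f(y)²·(1 − (1−2H)·y·f'(y)/f(y)) for all y in a neighborhood of 0. Then f'(0) = ρ/(2(H+1/2)(H+3/2)). -/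
/-- If a smooth f with f(0) = 1, f nonvanishing near 0, satisfies the rough SABR ODE
(1 − yf'/f)²·(1 + 2ρy/(2H+1) + (y/(2H+1))²) = f²·(1 − (1−2H)yf'/f) near 0,
then f'(0) = ρ/(2(H+1/2)(H+3/2)). -/
theorem sabr_f_skew (H ρ : ℝ) (hH : H ∈ Set.Ioc (0 : ℝ) (1 / 2))
    (f : ℝ → ℝ) (hf : ContDiff ℝ (⊤ : ℕ∞) f) (hf0 : f 0 = 1)
    (s : Set ℝ) (hs : s ∈ nhds (0 : ℝ)) (hne : ∀ y ∈ s, f y ≠ 0)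
    (hode : ∀ y ∈ s,
      (1 - y * deriv f y / f y) ^ 2 *
          (1 + 2 * ρ * y / (2 * H + 1) + (y / (2 * H + 1)) ^ 2) =
        (f y) ^ 2 * (1 - (1 - 2 * H) * y * deriv f y / f y)) :
    deriv f 0 = ρ / (2 * (H + 1 / 2) * (H + 3 / 2)) := by
  obtain ⟨hH0, hH12⟩ := hH
  have hfd : Differentiable ℝ f := hf.differentiable (by simp)
  have hdfd : Differentiable ℝ (deriv f) := by
    have := (contDiff_infty_iff_deriv.mp (hf.of_le (by simp) : ContDiff ℝ (⊤:ℕ∞) f)).2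
    exact this.differentiable (by simp)
  have hf0ne : f 0 ≠ 0 := by rw [hf0]; norm_num
  set a := deriv f 0 with ha
  set c := deriv (deriv f) 0 with hc0
  have h1 : HasDerivAt f a 0 := (hfd 0).hasDerivAt
  have hc : HasDerivAt (deriv f) c 0 :=
    (hdfd 0).hasDerivAt
  -- u y = y * deriv f y / f y
  have hu : HasDerivAt (fun y => y * deriv f y / f y)
      (((1 * deriv f 0 + 0 * c) * f 0 - 0 * deriv f 0 * c) / f 0 ^ 2) 0 := by
    have := ((hasDerivAt_id (0 : ℝ)).mul hc).div h1 hf0ne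
    simpa [Pi.mul_def, Pi.div_def, Pi.sub_def, Pi.pow_def] using this
  have hA : HasDerivAt (fun y => (1 - y * deriv f y / f y) ^ 2)
      ((2 : ℕ) * (1 - 0 * deriv f 0 / f 0) ^ (2 - 1) *
        (0 - ((1 * deriv f 0 + 0 * c) * f 0 - 0 * deriv f 0 * c) / f 0 ^ 2)) 0 := by
    have := ((hasDerivAt_const (0 : ℝ) (1 : ℝ)).sub hu).pow 2
    simpa [Pi.mul_def, Pi.div_def, Pi.sub_def, Pi.pow_def] using this
  have hP1 : HasDerivAt (fun y : ℝ => 2 * ρ * y / (2 * H + 1))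
      (2 * ρ * 1 / (2 * H + 1)) 0 :=
    (((hasDerivAt_id (0 : ℝ)).const_mul (2 * ρ)).div_const (2 * H + 1))
  have hP2 : HasDerivAt (fun y : ℝ => (y / (2 * H + 1)) ^ 2)
      ((2 : ℕ) * ((0 : ℝ) / (2 * H + 1)) ^ (2 - 1) * (1 / (2 * H + 1))) 0 :=
    ((hasDerivAt_id (0 : ℝ)).div_const (2 * H + 1)).pow 2
  have hP : HasDerivAt (fun y : ℝ => 1 + 2 * ρ * y / (2 * H + 1) + (y / (2 * H + 1)) ^ 2)
      ((0 + 2 * ρ * 1 / (2 * H + 1)) +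
        ((2 : ℕ) * ((0 : ℝ) / (2 * H + 1)) ^ (2 - 1) * (1 / (2 * H + 1)))) 0 :=
    ((hasDerivAt_const (0 : ℝ) (1 : ℝ)).add hP1).add hP2
  have hL : HasDerivAt (fun y =>
      (1 - y * deriv f y / f y) ^ 2 *
        (1 + 2 * ρ * y / (2 * H + 1) + (y / (2 * H + 1)) ^ 2))
      (((2 : ℕ) * (1 - 0 * deriv f 0 / f 0) ^ (2 - 1) *
          (0 - ((1 * deriv f 0 + 0 * c) * f 0 - 0 * deriv f 0 * c) / f 0 ^ 2)) *
        (1 + 2 * ρ * 0 / (2 * H + 1) + ((0 : ℝ) / (2 * H + 1)) ^ 2) +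
        (1 - 0 * deriv f 0 / f 0) ^ 2 *
          ((0 + 2 * ρ * 1 / (2 * H + 1)) +
            ((2 : ℕ) * ((0 : ℝ) / (2 * H + 1)) ^ (2 - 1) * (1 / (2 * H + 1))))) 0 :=
    hA.mul hP
  have hf2 : HasDerivAt (fun y => f y ^ 2) ((2 : ℕ) * f 0 ^ (2 - 1) * a) 0 := h1.pow 2
  have hv : HasDerivAt (fun y => (1 - 2 * H) * y * deriv f y / f y)
      ((((1 - 2 * H) * 1 * deriv f 0 + (1 - 2 * H) * 0 * c) * f 0 -
          (1 - 2 * H) * 0 * deriv f 0 * c) / f 0 ^ 2) 0 := by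
    have := ((((hasDerivAt_id (0 : ℝ)).const_mul (1 - 2 * H)).mul hc).div h1 hf0ne)
    simpa [Pi.mul_def, Pi.div_def, Pi.sub_def, Pi.pow_def] using this
  have hRin : HasDerivAt (fun y => 1 - (1 - 2 * H) * y * deriv f y / f y)
      (0 - (((1 - 2 * H) * 1 * deriv f 0 + (1 - 2 * H) * 0 * c) * f 0 -
          (1 - 2 * H) * 0 * deriv f 0 * c) / f 0 ^ 2) 0 := by
    have := (hasDerivAt_const (0 : ℝ) (1 : ℝ)).sub hv
    simpa [Pi.mul_def, Pi.div_def, Pi.sub_def, Pi.pow_def] using this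
  have hR : HasDerivAt (fun y =>
      f y ^ 2 * (1 - (1 - 2 * H) * y * deriv f y / f y))
      (((2 : ℕ) * f 0 ^ (2 - 1) * a) * (1 - (1 - 2 * H) * 0 * deriv f 0 / f 0) +
        f 0 ^ 2 *
          (0 - (((1 - 2 * H) * 1 * deriv f 0 + (1 - 2 * H) * 0 * c) * f 0 -
              (1 - 2 * H) * 0 * deriv f 0 * c) / f 0 ^ 2)) 0 :=
    hf2.mul hRin
  have heq : (fun y =>
      (1 - y * deriv f y / f y) ^ 2 *
        (1 + 2 * ρ * y / (2 * H + 1) + (y / (2 * H + 1)) ^ 2)) =ᶠ[nhds (0 : ℝ)]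
      (fun y => f y ^ 2 * (1 - (1 - 2 * H) * y * deriv f y / f y)) :=
    Filter.eventuallyEq_of_mem hs hode
  have hderiv := heq.deriv_eq (x := 0)
  rw [hL.deriv, hR.deriv] at hderiv
  have h2H1 : (2 * H + 1 : ℝ) ≠ 0 := by positivity
  have h2H3 : (2 * H + 3 : ℝ) ≠ 0 := by positivity
  have hden : (2 * (H + 1 / 2) * (H + 3 / 2) : ℝ) ≠ 0 := by positivity
  rw [hf0] at hderiv
  simp only [← ha] at hderiv
  field_simp at hderiv ⊢
  norm_num at hderiv
  nlinarith [hderiv, sq_nonneg (2 * H + 1), hH0]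
end

section
/- Let H ∈ (0,1/2], ρ ∈ ℝ, and suppose f is smooth near 0 with f(0) = 1 satisfying the rough SABR ODE (1 − y·f'/f)²·(1 + 2ρy/(2H+1) + (y/(2H+1))²) = f²·(1 − (1−2H)·y·f'/f). Then, writing f(y) = 1 + ay + by²/2 + …, the coefficient b = f''(0) equals ((2H+3)² − 12(2H+1)ρ²)/(2(H+1)(2H+1)²(2H+3)²). -/
/-- If a smooth f with f(0) = 1, f nonvanishing near 0, satisfies the rough SABR ODE
(1 − yf'/f)²·(1 + 2ρy/(2H+1) + (y/(2H+1))²) = f²·(1 − (1−2H)yf'/f) near 0,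
then the second-order Taylor coefficient b in f(y) = 1 + ay + by²/2 + …, i.e. f''(0),
equals ((2H+3)² − 12(2H+1)ρ²)/(2(H+1)(2H+1)²(2H+3)²). -/
theorem sabr_f_curvature (H ρ : ℝ) (hH : H ∈ Set.Ioc (0 : ℝ) (1 / 2))
    (f : ℝ → ℝ) (hf : ContDiff ℝ (⊤ : ℕ∞) f) (hf0 : f 0 = 1)
    (s : Set ℝ) (hs : s ∈ nhds (0 : ℝ)) (hne : ∀ y ∈ s, f y ≠ 0)
    (hode : ∀ y ∈ s,
      (1 - y * deriv f y / f y) ^ 2 *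
          (1 + 2 * ρ * y / (2 * H + 1) + (y / (2 * H + 1)) ^ 2) =
        (f y) ^ 2 * (1 - (1 - 2 * H) * y * deriv f y / f y)) :
    iteratedDeriv 2 f 0 =
      ((2 * H + 3) ^ 2 - 12 * (2 * H + 1) * ρ ^ 2) /
        (2 * (H + 1) * (2 * H + 1) ^ 2 * (2 * H + 3) ^ 2) := by
  obtain ⟨hH0, -⟩ := hH
  have hc1 : (2 * H + 1) ≠ 0 := by nlinarith
  have hc3 : (2 * H + 3) ≠ 0 := by nlinarith
  have hc2 : (H + 1) ≠ 0 := by nlinarith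
  have hf' : ContDiff ℝ ((⊤:ℕ∞) : WithTop ℕ∞) f := hf.of_le (by simp)
  have hfd : Differentiable ℝ f := hf'.differentiable (by simp)
  have hf1 : ContDiff ℝ ((⊤:ℕ∞) : WithTop ℕ∞) (deriv f) := (contDiff_infty_iff_deriv.mp hf').2
  have hf1d : Differentiable ℝ (deriv f) := hf1.differentiable (by simp)
  have hf2 : ContDiff ℝ ((⊤:ℕ∞) : WithTop ℕ∞) (deriv (deriv f)) := (contDiff_infty_iff_deriv.mp hf1).2
  have hf2d : Differentiable ℝ (deriv (deriv f)) := hf2.differentiable (by simp)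
  have hdf : ∀ y : ℝ, HasDerivAt f (deriv f y) y := fun y => (hfd y).hasDerivAt
  have hdf1 : ∀ y : ℝ, HasDerivAt (deriv f) (deriv (deriv f) y) y :=
    fun y => (hf1d y).hasDerivAt
  have hdf2 : ∀ y : ℝ, HasDerivAt (deriv (deriv f)) (deriv (deriv (deriv f)) y) y :=
    fun y => (hf2d y).hasDerivAt
  set g : ℝ → ℝ := fun y =>
    (f y - y * deriv f y) ^ 2 * (1 + 2 * ρ * y / (2 * H + 1) + (y / (2 * H + 1)) ^ 2)
      - (f y) ^ 3 * (f y - (1 - 2 * H) * y * deriv f y) with hgdef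
  set g1 : ℝ → ℝ := fun y =>
    (2 * (f y - y * deriv f y) * (deriv f y - (1 * deriv f y + y * deriv (deriv f) y))) *
        (1 + 2 * ρ * y / (2 * H + 1) + (y / (2 * H + 1)) ^ 2)
      + (f y - y * deriv f y) ^ 2 *
          (2 * ρ * 1 / (2 * H + 1) + 2 * (y / (2 * H + 1)) ^ 1 * (1 / (2 * H + 1)))
      - ((3 * f y ^ 2 * deriv f y) * (f y - (1 - 2 * H) * y * deriv f y)
         + f y ^ 3 *
            (deriv f y - (1 - 2 * H) * (1 * deriv f y + y * deriv (deriv f) y)))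
    with hg1def
  -- g vanishes near 0
  have hg0 : g =ᶠ[nhds (0 : ℝ)] fun _ => 0 := by
    filter_upwards [hs] with y hy
    have h := hode y hy
    have hfy := hne y hy
    have key : g y = (f y) ^ 2 *
        ((1 - y * deriv f y / f y) ^ 2 *
          (1 + 2 * ρ * y / (2 * H + 1) + (y / (2 * H + 1)) ^ 2) -
         (f y) ^ 2 * (1 - (1 - 2 * H) * y * deriv f y / f y)) := by
      simp only [hgdef]
      field_simp
    rw [key, h]
    ring
  -- building blocks for derivatives
  have hu : ∀ y : ℝ, HasDerivAt (fun y => f y - y * deriv f y)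
      (deriv f y - (1 * deriv f y + y * deriv (deriv f) y)) y :=
    fun y => (hdf y).sub ((hasDerivAt_id y).mul (hdf1 y))
  have hQ : ∀ y : ℝ, HasDerivAt
      (fun y : ℝ => 1 + 2 * ρ * y / (2 * H + 1) + (y / (2 * H + 1)) ^ 2)
      (0 + 2 * ρ * 1 / (2 * H + 1) + 2 * (y / (2 * H + 1)) ^ 1 * (1 / (2 * H + 1))) y :=
    fun y => ((hasDerivAt_const y (1 : ℝ)).add
      (((hasDerivAt_id y).const_mul (2 * ρ)).div_const (2 * H + 1))).add
      (((hasDerivAt_id y).div_const (2 * H + 1)).pow 2)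
  have hv : ∀ y : ℝ, HasDerivAt (fun y => f y - (1 - 2 * H) * y * deriv f y)
      (deriv f y - (1 - 2 * H) * (1 * deriv f y + y * deriv (deriv f) y)) y := by
    intro y
    have h1 := (((hasDerivAt_id y).const_mul (1 - 2 * H)).mul (hdf1 y))
    exact ((hdf y).sub h1).congr_deriv (by simp only [id_eq]; try ring)
  -- deriv g = g1
  have hdg : ∀ y : ℝ, HasDerivAt g (g1 y) y := by
    intro y
    have hcomb := (((hu y).pow 2).mul (hQ y)).sub (((hdf y).pow 3).mul (hv y))
    exact hcomb.congr_deriv (by simp only [hg1def, id_eq, Pi.pow_apply]; ring)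
  have hderiv_g : deriv g = g1 := funext fun y => (hdg y).deriv
  -- first equation: g1 0 = 0
  have eq1 : g1 0 = 0 := by
    have h1 : deriv g =ᶠ[nhds (0 : ℝ)] deriv (fun _ => (0 : ℝ)) := hg0.deriv
    have h2 := h1.self_of_nhds
    rw [hderiv_g] at h2
    simpa using h2
  -- second derivative of g at 0
  have hW : HasDerivAt
      (fun y => deriv f y - (1 * deriv f y + y * deriv (deriv f) y))
      (deriv (deriv f) 0 - (1 * deriv (deriv f) 0 +
        (1 * deriv (deriv f) 0 + 0 * deriv (deriv (deriv f)) 0))) 0 := by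
    have h1 := ((hdf1 0).const_mul (1 : ℝ)).add ((hasDerivAt_id 0).mul (hdf2 0))
    exact ((hdf1 0).sub h1).congr_deriv (by simp only [id_eq]; try ring)
  have hQd : HasDerivAt
      (fun y : ℝ => 2 * ρ * 1 / (2 * H + 1) + 2 * (y / (2 * H + 1)) ^ 1 * (1 / (2 * H + 1)))
      (0 + (2 * (1 * (0 / (2 * H + 1)) ^ 0 * (1 / (2 * H + 1)))) * (1 / (2 * H + 1))) 0 := by
    have h2 := ((((hasDerivAt_id (0:ℝ)).div_const (2 * H + 1)).pow 1).const_mul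
      (2 : ℝ)).mul_const (1 / (2 * H + 1))
    exact ((hasDerivAt_const (0:ℝ) (2 * ρ * 1 / (2 * H + 1))).add h2).congr_deriv
      (by simp only [id_eq]; try ring)
  have hVd : HasDerivAt
      (fun y => deriv f y - (1 - 2 * H) * (1 * deriv f y + y * deriv (deriv f) y))
      (deriv (deriv f) 0 - (1 - 2 * H) * (1 * deriv (deriv f) 0 +
        (1 * deriv (deriv f) 0 + 0 * deriv (deriv (deriv f)) 0))) 0 := by
    have h1 := (((hdf1 0).const_mul (1 : ℝ)).add
      ((hasDerivAt_id 0).mul (hdf2 0))).const_mul (1 - 2 * H)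
    exact ((hdf1 0).sub h1).congr_deriv (by simp only [id_eq]; try ring)
  have hW3 : HasDerivAt (fun y => 3 * f y ^ 2 * deriv f y)
      ((3 * (2 * f 0 ^ 1 * deriv f 0)) * deriv f 0 +
        (3 * f 0 ^ 2) * deriv (deriv f) 0) 0 := by
    have h1 := (((hdf (0:ℝ)).pow 2).const_mul (3 : ℝ)).mul (hdf1 0)
    exact h1.congr_deriv (by simp only [Pi.pow_apply]; ring)
  have hT1 : HasDerivAt
      (fun y => 2 * (f y - y * deriv f y) *
        (deriv f y - (1 * deriv f y + y * deriv (deriv f) y)))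
      ((2 * (deriv f 0 - (1 * deriv f 0 + 0 * deriv (deriv f) 0))) *
          (deriv f 0 - (1 * deriv f 0 + (1 * deriv f 0)⁻¹ * 0)) +
        (2 * (f 0 - 0 * deriv f 0)) *
          (deriv (deriv f) 0 - (1 * deriv (deriv f) 0 +
            (1 * deriv (deriv f) 0 + 0 * deriv (deriv (deriv f)) 0)))) 0 := by
    have h1 := ((hu 0).const_mul (2:ℝ)).mul hW
    exact h1.congr_deriv (by ring)
  have hbig : HasDerivAt g1 _ 0 :=
    ((hT1.mul (hQ 0)).add (((hu 0).pow 2).mul hQd)).sub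
      ((hW3.mul (hv 0)).add (((hdf 0).pow 3).mul hVd))
  have eq2 : deriv g1 0 = 0 := by
    have h1 : deriv (deriv g) =ᶠ[nhds (0 : ℝ)] deriv (deriv (fun _ => (0 : ℝ))) :=
      hg0.deriv.deriv
    have h2 := h1.self_of_nhds
    rw [hderiv_g] at h2
    simpa using h2
  have eq2' := hbig.deriv.symm.trans eq2
  simp only [hg1def] at eq1
  norm_num [hf0] at eq1 eq2'
  rw [iteratedDeriv_succ, iteratedDeriv_one]
  have hinv : (2 * H + 1)⁻¹ * (2 * H + 1) = 1 := inv_mul_cancel₀ hc1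
  field_simp at eq1 eq2' ⊢
  linear_combination (3 * (2 * H + 1) * (2 * ρ + (2 * H + 1) * (2 * H + 3) * deriv f 0)) * eq1
    - (2 * H + 3) ^ 2 / 2 * eq2'
end

section
/- Let H ∈ [0,1/2], ρ ∈ (−1,1), and define the interpolation G_A(y) = (2H+1)²·{(3(1−2H)/(2H+3))·G₀(y/(2H+1)) + (2H/(2H+3))·G_{1/2}(2y/(2H+1))}, where G₀ and G_{1/2} have expansions G_{1/2}(y) = y² − ρy³/2 + O(y⁴) and G₀(y) = y² − 4ρy³/3 + O(y⁴). Then G_A(y) = y² − (ρ/(γ(γ+1)))·y³ + O(y⁴) with γ = H + 1/2; that is, G_A matches the true ODE solution's coefficients of y² and y³. -/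
lemma itd_cmul (n : ℕ) (c : ℝ) (f : ℝ → ℝ) (hf : ContDiff ℝ n f) (x : ℝ) :
    iteratedDeriv n (fun y => c * f y) x = c * iteratedDeriv n f x := by
  simp_rw [← iteratedDerivWithin_univ]
  exact iteratedDerivWithin_const_mul (Set.mem_univ x) uniqueDiffOn_univ c hf.contDiffWithinAt

lemma itd_add (n : ℕ) (f g : ℝ → ℝ) (hf : ContDiff ℝ n f) (hg : ContDiff ℝ n g) (x : ℝ) :
    iteratedDeriv n (fun y => f y + g y) x = iteratedDeriv n f x + iteratedDeriv n g x := by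
  simp_rw [← iteratedDerivWithin_univ]
  exact iteratedDerivWithin_add (Set.mem_univ x) uniqueDiffOn_univ hf.contDiffWithinAt hg.contDiffWithinAt

lemma itd_main (n : ℕ) (A b1 b2 c1 c2 : ℝ) (f g : ℝ → ℝ)
    (hf : ContDiff ℝ (⊤ : ℕ∞) f) (hg : ContDiff ℝ (⊤ : ℕ∞) g) :
    iteratedDeriv n (fun y => A * (b1 * f (c1 * y) + b2 * g (c2 * y))) 0 =
      A * (b1 * (c1 ^ n * iteratedDeriv n f 0) + b2 * (c2 ^ n * iteratedDeriv n g 0)) := by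
  have hf' : ContDiff ℝ n fun y => f (c1 * y) :=
    (hf.of_le (by exact_mod_cast le_top)).comp (contDiff_const.mul contDiff_id)
  have hg' : ContDiff ℝ n fun y => g (c2 * y) :=
    (hg.of_le (by exact_mod_cast le_top)).comp (contDiff_const.mul contDiff_id)
  rw [itd_cmul n A _ ((contDiff_const.mul hf').add (contDiff_const.mul hg')),
    itd_add n _ _ (contDiff_const.mul hf') (contDiff_const.mul hg'),
    itd_cmul n b1 _ hf', itd_cmul n b2 _ hg',
    iteratedDeriv_comp_const_mul (hf.of_le (by exact_mod_cast le_top)) c1, iteratedDeriv_comp_const_mul (hg.of_le (by exact_mod_cast le_top)) c2]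
  simp

/-- The interpolation G_A(y) = (2H+1)²·{(3(1−2H)/(2H+3))·G₀(y/(2H+1)) +
(2H/(2H+3))·G_{1/2}(2y/(2H+1))}, built from smooth G₀, G_{1/2} with expansions
G₀(y) = y² − 4ρy³/3 + O(y⁴) and G_{1/2}(y) = y² − ρy³/2 + O(y⁴), satisfies
G_A(y) = y² − (ρ/(γ(γ+1)))y³ + O(y⁴) with γ = H + 1/2: it matches the true ODE
solution's coefficients of y² and y³. -/
theorem sabr_GA_matches (H ρ : ℝ) (hH : H ∈ Set.Icc (0 : ℝ) (1 / 2))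
    (hρ : ρ ∈ Set.Ioo (-1 : ℝ) 1)
    (G₀ Gh GA : ℝ → ℝ) (hG₀smooth : ContDiff ℝ (⊤ : ℕ∞) G₀) (hGhsmooth : ContDiff ℝ (⊤ : ℕ∞) Gh)
    (hG₀0 : G₀ 0 = 0) (hG₀1 : deriv G₀ 0 = 0) (hG₀2 : iteratedDeriv 2 G₀ 0 = 2)
    (hG₀3 : iteratedDeriv 3 G₀ 0 = 6 * (-(4 * ρ / 3)))
    (hGh0 : Gh 0 = 0) (hGh1 : deriv Gh 0 = 0) (hGh2 : iteratedDeriv 2 Gh 0 = 2)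
    (hGh3 : iteratedDeriv 3 Gh 0 = 6 * (-(ρ / 2)))
    (hGA : ∀ y, GA y = (2 * H + 1) ^ 2 *
      ((3 * (1 - 2 * H) / (2 * H + 3)) * G₀ (y / (2 * H + 1)) +
        (2 * H / (2 * H + 3)) * Gh (2 * y / (2 * H + 1)))) :
    GA 0 = 0 ∧ deriv GA 0 = 0 ∧ iteratedDeriv 2 GA 0 = 2 ∧
      iteratedDeriv 3 GA 0 = 6 * (-(ρ / ((H + 1 / 2) * ((H + 1 / 2) + 1)))) := by
  obtain ⟨hH0, hH1⟩ := hH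
  have ha : (2 * H + 1) ≠ 0 := by nlinarith
  have hb : (2 * H + 3) ≠ 0 := by nlinarith
  have hGA' : GA = fun y => (2 * H + 1) ^ 2 *
      ((3 * (1 - 2 * H) / (2 * H + 3)) * G₀ ((2 * H + 1)⁻¹ * y) +
        (2 * H / (2 * H + 3)) * Gh ((2 * (2 * H + 1)⁻¹) * y)) := by
    funext y
    rw [hGA y]
    ring_nf
  subst hGA'
  have key := fun n => itd_main n ((2 * H + 1) ^ 2) (3 * (1 - 2 * H) / (2 * H + 3))
    (2 * H / (2 * H + 3)) ((2 * H + 1)⁻¹) (2 * (2 * H + 1)⁻¹) G₀ Gh hG₀smooth hGhsmooth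
  refine ⟨?_, ?_, ?_, ?_⟩
  · simp [hG₀0, hGh0]
  · rw [← iteratedDeriv_one, key 1]; simp only [iteratedDeriv_one, hG₀1, hGh1]; ring
  · rw [key 2, hG₀2, hGh2]
    field_simp
    ring
  · rw [key 3, hG₀3, hGh3]
    have h2 : ((H + 1 / 2) * ((H + 1 / 2) + 1)) ≠ 0 := by nlinarith
    field_simp
    ring
end

section
/- The function G_{1/2}(y) = 4·(log((√(1 + ρy + y²/4) − ρ − y/2)/(1 − ρ)))² has Taylor expansion G_{1/2}(y) = y² − (ρ/2)·y³ + (1/48)·(15ρ² − 4)·y⁴ + O(y⁵) around y = 0. -/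
/-!
Write `G_{1/2}(y) = 4 log (1 + v y) ^ 2` with `v y = (√(1 + ρ y + y²/4) − ρ − y/2)/(1 − ρ) − 1`.
For a polynomial `P` with `P 0 = 1`, `√f − P = (f − P²)/(√f + P)` and `√f + P → 2`, so the quartic
Taylor polynomial of the square root, hence of `v`, is certified by the polynomial identity
`f − P² = O(y⁵)`. Since `4 log (1 + x)² = 4x² − 4x³ + 11/3 x⁴ + O(x⁵)` and `v = O(y)`, it remains to
substitute the Taylor polynomial of `v`; in `v ^ k` it may be truncated at degree `5 − k`, because
`u ^ k − w ^ k = O((u − w) y ^ (k − 1))` when `u, w = O(y)`, which keeps the final polynomial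
identity small.
-/

open Asymptotics Filter Topology Finset

section
variable {𝕜 : Type*} [NormedField 𝕜]

theorem isBigO_pow_of_eq_pow_mul {f q : 𝕜 → 𝕜} (k : ℕ) (hq : ContinuousAt q 0)
    (hf : ∀ x, f x = x ^ k * q x) : f =O[𝓝 0] fun x => x ^ k := by
  simpa [← hf] using (isBigO_refl (fun x : 𝕜 => x ^ k) _).mul (hq.tendsto.isBigO_one 𝕜)

theorem isBigO_pow_pow_of_le {k m : ℕ} (h : k ≤ m) :
    (fun x : 𝕜 => x ^ m) =O[𝓝 0] fun x => x ^ k :=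
  isBigO_pow_of_eq_pow_mul k (q := fun x => x ^ (m - k)) (continuous_pow _).continuousAt
    fun x => by rw [← pow_add, Nat.add_sub_cancel' h]

theorem isBigO_sum_range_sub_sum_range (c : ℕ → 𝕜) {m n : ℕ} (h : n ≤ m) :
    (fun x : 𝕜 => ∑ i ∈ range m, c i * x ^ i - ∑ i ∈ range n, c i * x ^ i) =O[𝓝 0]
      fun x => x ^ n := by
  simp_rw [← sum_Ico_eq_sub _ h]
  exact IsBigO.fun_sum fun i hi =>
    (isBigO_pow_pow_of_le (mem_Ico.1 hi).1).const_mul_left (c i)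

theorem Asymptotics.IsBigO.sub_sum_range_of_le {c : ℕ → 𝕜} {v : 𝕜 → 𝕜} {m n : ℕ}
    (hv : (fun x => v x - ∑ i ∈ range m, c i * x ^ i) =O[𝓝 0] fun x => x ^ m) (h : n ≤ m) :
    (fun x => v x - ∑ i ∈ range n, c i * x ^ i) =O[𝓝 0] fun x => x ^ n :=
  ((hv.trans (isBigO_pow_pow_of_le h)).add (isBigO_sum_range_sub_sum_range c h)).congr_left
    fun x => by ring

theorem Asymptotics.IsBigO.of_sub_sum_range {c : ℕ → 𝕜} {v : 𝕜 → 𝕜} {m : ℕ}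
    (hv : (fun x => v x - ∑ i ∈ range m, c i * x ^ i) =O[𝓝 0] fun x => x ^ m) (hm : 1 ≤ m)
    (hc : c 0 = 0) : v =O[𝓝 0] fun x => x ^ 1 := by
  simpa [hc] using hv.sub_sum_range_of_le hm

end

theorem Asymptotics.IsBigO.pow_succ_sub_pow_succ {α 𝕜 : Type*} [NormedField 𝕜] {l : Filter α}
    {u w f g : α → 𝕜} (huw : (fun x => u x - w x) =O[l] f) (hu : u =O[l] g) (hw : w =O[l] g)
    (k : ℕ) :
    (fun x => u x ^ (k + 1) - w x ^ (k + 1)) =O[l] fun x => f x * g x ^ k := by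
  induction k with
  | zero => simpa using huw
  | succ k ih =>
    have hleft : (fun x => u x * (u x ^ (k + 1) - w x ^ (k + 1))) =O[l]
        fun x => f x * g x ^ (k + 1) := (hu.mul ih).congr_right fun x => by ring
    have hright : (fun x => w x ^ (k + 1) * (u x - w x)) =O[l] fun x => f x * g x ^ (k + 1) :=
      ((hw.pow (k + 1)).mul huw).congr_right fun x => by ring
    exact (hleft.add hright).congr_left fun x => by ring

theorem isBigO_sqrt_sub {α : Type*} {l : Filter α} {f g : α → ℝ} {c : ℝ} (hc : 0 < c)
    (hg : Tendsto g l (𝓝 c)) (hf : ∀ᶠ x in l, 0 ≤ f x) :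
    (fun x => √(f x) - g x) =O[l] fun x => f x - g x ^ 2 := by
  refine IsBigO.of_bound (2 / c) ?_
  filter_upwards [hf, hg.eventually_const_lt (half_lt_self hc)] with x hfx hgx
  have hsum : c / 2 ≤ |√(f x) + g x| := by
    rw [abs_of_pos (by linarith [Real.sqrt_nonneg (f x)])]; linarith [Real.sqrt_nonneg (f x)]
  have hprod : (√(f x) - g x) * (√(f x) + g x) = f x - g x ^ 2 := by
    linear_combination Real.sq_sqrt hfx
  rw [Real.norm_eq_abs, Real.norm_eq_abs, ← hprod, abs_mul, div_mul_eq_mul_div, le_div_iff₀ hc]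
  nlinarith [abs_nonneg (√(f x) - g x)]

theorem isBigO_log_one_add_sub_sum_range (n : ℕ) :
    (fun x : ℝ => Real.log (1 + x) - ∑ i ∈ range n, (-1) ^ i * x ^ (i + 1) / (i + 1)) =O[𝓝 0]
      fun x => x ^ (n + 1) := by
  refine IsBigO.of_bound 2 ?_
  filter_upwards [Metric.ball_mem_nhds (0 : ℝ) one_half_pos] with x hx
  rw [Metric.mem_ball, dist_zero_right, Real.norm_eq_abs] at hx
  have hbound := Real.abs_log_sub_add_sum_range_le (x := -x) (by rw [abs_neg]; linarith) n
  have hsum : ∑ i ∈ range n, (-x) ^ (i + 1) / (i + 1) =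
      -∑ i ∈ range n, (-1) ^ i * x ^ (i + 1) / (i + 1) := by
    rw [← sum_neg_distrib]
    refine sum_congr rfl fun i _ => ?_
    rw [neg_pow, pow_succ]; ring
  rw [hsum, sub_neg_eq_add, abs_neg, neg_add_eq_sub] at hbound
  rw [Real.norm_eq_abs, Real.norm_eq_abs, abs_pow]
  calc _ ≤ |x| ^ (n + 1) / (1 - |x|) := hbound
    _ ≤ 2 * |x| ^ (n + 1) := by
      rw [div_le_iff₀ (by linarith)]
      nlinarith [pow_nonneg (abs_nonneg x) (n + 1)]

theorem isBigO_four_mul_log_one_add_sq_sub :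
    (fun x : ℝ => 4 * Real.log (1 + x) ^ 2 - (4 * x ^ 2 - 4 * x ^ 3 + 11 / 3 * x ^ 4)) =O[𝓝 0]
      fun x => x ^ 5 := by
  set L := fun x : ℝ => x - x ^ 2 / 2 + x ^ 3 / 3
  have hlogL : (fun x => Real.log (1 + x) - L x) =O[𝓝 0] fun x => x ^ 4 := by
    refine (isBigO_log_one_add_sub_sum_range 3).congr_left fun x => ?_
    simp only [sum_range_succ, sum_range_zero, L]
    ring
  have hL : L =O[𝓝 0] fun x => x ^ 1 :=
    isBigO_pow_of_eq_pow_mul 1 (q := fun x => 1 - x / 2 + x ^ 2 / 3) (by fun_prop)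
      fun x => by ring
  have hlog : (fun x => Real.log (1 + x)) =O[𝓝 0] fun x => x ^ 1 :=
    ((hlogL.trans (isBigO_pow_pow_of_le (by norm_num))).add hL).congr_left fun x => by ring
  have hsq : (fun x => Real.log (1 + x) ^ 2 - L x ^ 2) =O[𝓝 0] fun x => x ^ 5 :=
    (hlogL.pow_succ_sub_pow_succ hlog hL 1).congr (fun x => by ring) fun x => by ring
  have hpoly : (fun x => 4 * L x ^ 2 - (4 * x ^ 2 - 4 * x ^ 3 + 11 / 3 * x ^ 4)) =O[𝓝 0]
      fun x => x ^ 5 :=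
    isBigO_pow_of_eq_pow_mul 5 (q := fun x => -4 / 3 + 4 / 9 * x) (by fun_prop)
      fun x => by ring
  exact ((hsq.const_mul_left 4).add hpoly).congr_left fun x => by ring

noncomputable def sabrRatio (ρ y : ℝ) : ℝ := (√(1 + ρ * y + y ^ 2 / 4) - ρ - y / 2) / (1 - ρ)

noncomputable def sabrRatioCoeff (ρ : ℝ) : ℕ → ℝ
  | 1 => -1 / 2
  | 2 => (1 + ρ) / 8
  | 3 => -ρ * (1 + ρ) / 16
  | 4 => (1 + ρ) * (5 * ρ ^ 2 - 1) / 128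
  | _ => 0

theorem sabrRatioCoeff_zero (ρ : ℝ) : sabrRatioCoeff ρ 0 = 0 := rfl

theorem isBigO_sabrRatio_sub_one_sub_sum_range {ρ : ℝ} (hρ : ρ ≠ 1) :
    (fun y => sabrRatio ρ y - 1 - ∑ i ∈ range 5, sabrRatioCoeff ρ i * y ^ i) =O[𝓝 0]
      fun y => y ^ 5 := by
  set p := fun y : ℝ => ∑ i ∈ range 5, sabrRatioCoeff ρ i * y ^ i
  have hp : p = fun y => -y / 2 + (1 + ρ) / 8 * y ^ 2 - ρ * (1 + ρ) / 16 * y ^ 3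
      + (1 + ρ) * (5 * ρ ^ 2 - 1) / 128 * y ^ 4 := by
    funext y
    simp only [p, sum_range_succ, sum_range_zero, sabrRatioCoeff]
    ring
  set P := fun y => ρ + y / 2 + (1 - ρ) * (1 + p y)
  have hP : Tendsto P (𝓝 0) (𝓝 1) := by
    have hcont : Continuous P := by simp only [P, hp]; fun_prop
    simpa [P, hp] using hcont.tendsto 0
  have hrad : ∀ᶠ y in 𝓝 (0 : ℝ), 0 ≤ 1 + ρ * y + y ^ 2 / 4 := by
    have hcont : Continuous fun y : ℝ => 1 + ρ * y + y ^ 2 / 4 := by fun_prop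
    exact (hcont.tendsto' 0 1 (by simp)).eventually_const_le one_pos
  have hres : (fun y => 1 + ρ * y + y ^ 2 / 4 - P y ^ 2) =O[𝓝 0] fun y => y ^ 5 :=
    isBigO_pow_of_eq_pow_mul 5
      (q := fun y => ρ * (1 - ρ ^ 2) * (3 - 7 * ρ ^ 2) / 128
        + (1 - ρ ^ 2) ^ 2 * (1 - 7 * ρ ^ 2) / 512 * y
        + ρ * (1 - ρ ^ 2) ^ 2 * (5 * ρ ^ 2 - 1) / 1024 * y ^ 2
        - ((1 - ρ ^ 2) * (5 * ρ ^ 2 - 1)) ^ 2 / 16384 * y ^ 3)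
      (by fun_prop) fun y => by simp only [P, hp]; ring
  refine (((isBigO_sqrt_sub one_pos hP hrad).trans hres).const_mul_left (1 - ρ)⁻¹).congr_left
    fun y => ?_
  have h1ρ : 1 - ρ ≠ 0 := sub_ne_zero.2 hρ.symm
  simp only [sabrRatio, P]
  field_simp
  ring

theorem isBigO_quartic_sub_of_sabrRatioCoeff {ρ : ℝ} {v : ℝ → ℝ}
    (hv : (fun y => v y - ∑ i ∈ range 5, sabrRatioCoeff ρ i * y ^ i) =O[𝓝 0]
      fun y => y ^ 5) :
    (fun y => (4 * v y ^ 2 - 4 * v y ^ 3 + 11 / 3 * v y ^ 4)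
      - (y ^ 2 - ρ / 2 * y ^ 3 + (1 / 48) * (15 * ρ ^ 2 - 4) * y ^ 4)) =O[𝓝 0]
        fun y => y ^ 5 := by
  set p := fun n (y : ℝ) => ∑ i ∈ range n, sabrRatioCoeff ρ i * y ^ i
  have hp : ∀ n, 1 ≤ n → p n =O[𝓝 0] fun y => y ^ 1 := fun n hn =>
    (isBigO_sum_range_sub_sum_range (sabrRatioCoeff ρ) hn).congr_left fun y => by
      simp only [p, sum_range_one, sabrRatioCoeff_zero, zero_mul, sub_zero]
  have hv1 := hv.of_sub_sum_range (by norm_num) (sabrRatioCoeff_zero ρ)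
  have hpow (k : ℕ) (hk : k ≤ 4) :
      (fun y => v y ^ (k + 1) - p (5 - k) y ^ (k + 1)) =O[𝓝 0] fun y => y ^ 5 :=
    ((hv.sub_sum_range_of_le (n := 5 - k) (by omega)).pow_succ_sub_pow_succ hv1
      (hp _ (by omega)) k).congr_right fun y => by
        rw [← pow_mul, one_mul, ← pow_add, Nat.sub_add_cancel (by omega)]
  have hpoly : (fun y => (4 * p 4 y ^ 2 - 4 * p 3 y ^ 3 + 11 / 3 * p 2 y ^ 4)
      - (y ^ 2 - ρ / 2 * y ^ 3 + (1 / 48) * (15 * ρ ^ 2 - 4) * y ^ 4)) =O[𝓝 0]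
        fun y => y ^ 5 :=
    isBigO_pow_of_eq_pow_mul 5
      (q := fun y => (1 + ρ) ^ 2 * (3 - 2 * ρ) / 32
        + (1 + ρ) ^ 2 * (1 + 2 * ρ) * (ρ - 1) / 128 * y)
      (by fun_prop) fun y => by
        simp only [p, sum_range_succ, sum_range_zero, sabrRatioCoeff]
        ring
  have hsq := (hpow 1 (by norm_num)).const_mul_left 4
  have hcube := (hpow 2 (by norm_num)).const_mul_left 4
  have hquart := (hpow 3 (by norm_num)).const_mul_left (11 / 3)
  exact (((hsq.sub hcube).add hquart).add hpoly).congr_left fun y => by ring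

/-- Taylor expansion of G_{1/2}(y) = 4·(log((√(1+ρy+y²/4) − ρ − y/2)/(1−ρ)))²:
G_{1/2}(y) = y² − (ρ/2)y³ + (1/48)(15ρ² − 4)y⁴ + O(y⁵) around y = 0. -/
theorem sabr_Ghalf_taylor (ρ : ℝ) (hρ : ρ ∈ Set.Ioo (-1 : ℝ) 1) (G : ℝ → ℝ)
    (hG : ∀ y, G y =
      4 * (Real.log ((Real.sqrt (1 + ρ * y + y ^ 2 / 4) - ρ - y / 2) / (1 - ρ))) ^ 2) :
    (fun y => G y - (y ^ 2 - ρ / 2 * y ^ 3 + (1 / 48) * (15 * ρ ^ 2 - 4) * y ^ 4))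
      =O[nhds 0] fun y => y ^ 5 := by
  have hv := isBigO_sabrRatio_sub_one_sub_sum_range hρ.2.ne
  have hv1 := hv.of_sub_sum_range (by norm_num) (sabrRatioCoeff_zero ρ)
  have hv0 := hv1.trans_tendsto ((continuous_pow 1).tendsto' 0 0 (zero_pow one_ne_zero))
  have hlog := (isBigO_four_mul_log_one_add_sq_sub.comp_tendsto hv0).trans (hv1.pow 5)
  have hquartic := isBigO_quartic_sub_of_sabrRatioCoeff hv
  refine ((hlog.congr_right fun y => by ring).add hquartic).congr_left fun y => ?_
  simp only [Function.comp_apply, hG, sabrRatio, add_sub_cancel]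
  ring
end
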